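/- Let Ω ⊂ ℝⁿ be a bounded convex open set (n ≥ 2) and G : [0,∞) → ℝ a strictly positive locally integrable function. Suppose f ∈ L¹(Ω) (extended by 0 outside Ω) satisfies ∫_{Ω ∩ Σ} f dH^{n−1} = G(min_{j=1,2} dist(Σ, Π_j)) for every hyperplane Σ with H^{n−1}(Ω ∩ Σ) > 0, where Π₁, Π₂ are the two supporting hyperplanes of Ω parallel to Σ. Then Ω is an open ball. -/

import Mathlib

open MeasureTheory Set Filter Topology Module Bornology
open scoped RealInnerProductSpace NNReal

/-!
Fix a unit normal `ξ` and let `r₁ < r₂` be the levels of the two supporting hyperplanes of `Ω`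
with normal `ξ`. Integrating the Radon transform over `t` gives, by Fubini, a multiple of
`∫ f` resp. of `⟪∫ f(x) x dx, ξ⟫` when weighted by `1` resp. by `t`. The hypothesis says that, as a
function of `t`, the Radon transform is `G((r₂ - r₁)/2 - |t - (r₁ + r₂)/2|)` on `(r₁, r₂)` and `0`
outside. Hence `∫ f` is twice `∫₀^{(r₂-r₁)/2} G`, and since `G > 0` the width `r₂ - r₁ = 2R` does
not depend on `ξ`; and by symmetry of the profile the `t`-weighted integral is the mid-level
`(r₁ + r₂)/2` times `∫ f`, so `(r₁ + r₂)/2 = ⟪c, ξ⟫` for the barycenter `c` of `f`. Thus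
`r₂(ξ) = ⟪c, ξ⟫ + R` for every `ξ`, and an open convex set with this support function is the ball
`B(c, R)`.
-/

instance isAddHaarMeasure_hausdorffMeasure_euclideanSpace (m : ℕ) :
    (μH[m] : Measure (EuclideanSpace ℝ (Fin m))).IsAddHaarMeasure := by
  simpa using isAddHaarMeasure_hausdorffMeasure (E := EuclideanSpace ℝ (Fin m))

-- `μH[m]` carries no normalizing constant, so on `ℝᵐ` it is only a multiple of Lebesgue measure.
noncomputable def hausdorffVolumeRatio (m : ℕ) : ℝ≥0 :=
  (μH[m] : Measure (EuclideanSpace ℝ (Fin m))).addHaarScalarFactor volume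

lemma hausdorffMeasure_euclideanSpace_eq_smul_volume (m : ℕ) :
    (μH[m] : Measure (EuclideanSpace ℝ (Fin m))) = hausdorffVolumeRatio m • volume :=
  Measure.isAddLeftInvariant_eq_smul _ _

lemma hausdorffVolumeRatio_pos (m : ℕ) : 0 < hausdorffVolumeRatio m :=
  Measure.addHaarScalarFactor_pos_of_isAddHaarMeasure _ _

section Slicing

variable {E : Type*} [NormedAddCommGroup E] [InnerProductSpace ℝ E] {m : ℕ}

lemma exists_orthonormalBasis_apply_zero_eq [FiniteDimensional ℝ E] (hE : finrank ℝ E = m + 1)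
    {ξ : E} (hξ : ‖ξ‖ = 1) : ∃ b : OrthonormalBasis (Fin (m + 1)) ℝ E, b 0 = ξ := by
  have horth : Orthonormal ℝ (({0} : Set (Fin (m + 1))).domRestrict fun _ => ξ) :=
    ⟨fun _ => hξ, fun i j hij => (hij (Subsingleton.elim i j)).elim⟩
  obtain ⟨b, hb⟩ := horth.exists_orthonormalBasis_extension_of_card_eq (by simp [hE])
  exact ⟨b, hb 0 rfl⟩

namespace OrthonormalBasis

variable (b : OrthonormalBasis (Fin (m + 1)) ℝ E)

noncomputable def sliceChart (p : ℝ × (Fin m → ℝ)) : E :=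
  b.repr.symm (WithLp.toLp 2 (Fin.cons p.1 p.2))

lemma inner_sliceChart (p : ℝ × (Fin m → ℝ)) : ⟪b.sliceChart p, b 0⟫ = p.1 := by
  simp [sliceChart, ← b.repr.inner_map_map, EuclideanSpace.inner_single_right]

lemma surjective_sliceChart : Function.Surjective b.sliceChart := fun x =>
  ⟨(b.repr x 0, Fin.tail (b.repr x).ofLp), by simp [sliceChart, Fin.cons_self_tail]⟩

noncomputable def hyperplaneParam (t : ℝ) (z : EuclideanSpace ℝ (Fin m)) : E :=
  b.sliceChart (t, z.ofLp)

lemma isometry_hyperplaneParam (t : ℝ) : Isometry (b.hyperplaneParam t) := by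
  refine Isometry.of_dist_eq fun z z' => ?_
  simp only [hyperplaneParam, sliceChart, LinearIsometryEquiv.dist_map, EuclideanSpace.dist_eq,
    Fin.sum_univ_succ, Fin.cons_zero, Fin.cons_succ, dist_self]
  simp

lemma range_hyperplaneParam (t : ℝ) : range (b.hyperplaneParam t) = {x | ⟪x, b 0⟫ = t} := by
  ext x
  constructor
  · rintro ⟨z, rfl⟩
    exact b.inner_sliceChart _
  · rintro (hx : ⟪x, b 0⟫ = t)
    obtain ⟨⟨s, y⟩, rfl⟩ := b.surjective_sliceChart x
    obtain rfl : s = t := by rwa [inner_sliceChart] at hx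
    exact ⟨WithLp.toLp 2 y, rfl⟩

variable [MeasurableSpace E] [BorelSpace E]

lemma measurePreserving_sliceChart [FiniteDimensional ℝ E] : MeasurePreserving b.sliceChart := by
  have h := (volume_preserving_piFinSuccAbove (fun _ : Fin (m + 1) => ℝ) 0).symm
  have hcons : ⇑(MeasurableEquiv.piFinSuccAbove (fun _ : Fin (m + 1) => ℝ) 0).symm =
      fun p => Fin.cons p.1 p.2 := by
    ext p : 1
    simp [MeasurableEquiv.piFinSuccAbove, Fin.insertNthEquiv, Fin.insertNth_zero']
  rw [hcons] at h
  exact b.measurePreserving_repr_symm.comp ((PiLp.volume_preserving_toLp _).comp h)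

lemma setIntegral_hyperplane_eq (t : ℝ) (g : E → ℝ) :
    ∫ x in {x | ⟪x, b 0⟫ = t}, g x ∂μH[m] =
      hausdorffVolumeRatio m * ∫ y, g (b.sliceChart (t, y)) := by
  have hemb := (b.isometry_hyperplaneParam t).isClosedEmbedding.measurableEmbedding
  rw [← b.range_hyperplaneParam, ← (b.isometry_hyperplaneParam t).map_hausdorffMeasure
    (Or.inl m.cast_nonneg), hemb.integral_map, hausdorffMeasure_euclideanSpace_eq_smul_volume,
    integral_smul_nnreal_measure,
    ← (EuclideanSpace.volume_preserving_symm_measurableEquiv_toLp (Fin m)).symm.integral_comp']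
  rfl

end OrthonormalBasis

variable [MeasurableSpace E] [BorelSpace E] {ξ : E} {g : E → ℝ}

lemma integrable_setIntegral_hyperplane [FiniteDimensional ℝ E] (hE : finrank ℝ E = m + 1)
    (hξ : ‖ξ‖ = 1) (hg : Integrable g) :
    Integrable fun t => ∫ x in {x | ⟪x, ξ⟫ = t}, g x ∂μH[m] := by
  obtain ⟨b, rfl⟩ := exists_orthonormalBasis_apply_zero_eq hE hξ
  simp_rw [b.setIntegral_hyperplane_eq]
  exact ((b.measurePreserving_sliceChart.integrable_comp_of_integrable hg).integral_prod_left
    (f := fun p => g (b.sliceChart p))).const_mul _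

lemma integral_setIntegral_hyperplane [FiniteDimensional ℝ E] (hE : finrank ℝ E = m + 1)
    (hξ : ‖ξ‖ = 1) (hg : Integrable g) :
    ∫ t, ∫ x in {x | ⟪x, ξ⟫ = t}, g x ∂μH[m] = hausdorffVolumeRatio m * ∫ x, g x := by
  obtain ⟨b, rfl⟩ := exists_orthonormalBasis_apply_zero_eq hE hξ
  have hmp := b.measurePreserving_sliceChart
  have hchart : ∫ x, g x = ∫ p, g (b.sliceChart p) := by
    rw [← hmp.map_eq, integral_map hmp.measurable.aemeasurable]
    exact hmp.map_eq ▸ hg.aestronglyMeasurable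
  simp_rw [b.setIntegral_hyperplane_eq, integral_const_mul, hchart, Measure.volume_eq_prod]
  rw [integral_prod (fun p => g (b.sliceChart p)) (hmp.integrable_comp_of_integrable hg)]

lemma hausdorffMeasure_inter_hyperplane_pos [FiniteDimensional ℝ E] (hE : finrank ℝ E = m + 1)
    (hξ : ‖ξ‖ = 1) {U : Set E} (hU : IsOpen U) {x : E} (hx : x ∈ U) :
    0 < μH[m] (U ∩ {y | ⟪y, ξ⟫ = ⟪x, ξ⟫}) := by
  obtain ⟨b, rfl⟩ := exists_orthonormalBasis_apply_zero_eq hE hξ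
  have hiso := b.isometry_hyperplaneParam ⟪x, b 0⟫
  obtain ⟨z, hz⟩ : x ∈ range (b.hyperplaneParam ⟪x, b 0⟫) := by
    rw [b.range_hyperplaneParam]; rfl
  rw [← b.range_hyperplaneParam, ← image_preimage_eq_inter_range,
    hiso.hausdorffMeasure_image (Or.inl m.cast_nonneg)]
  exact (hU.preimage hiso.continuous).measure_pos _ ⟨z, by rwa [mem_preimage, hz]⟩

end Slicing

section SupportingHyperplanes

variable {E : Type*} [NormedAddCommGroup E] [InnerProductSpace ℝ E] {Ω : Set E} {ξ x : E}

-- The paper's `r₁(ξ)` and `r₂(ξ)`, and the half-width and mid-level of the slab between them.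
noncomputable def lowerSupport (Ω : Set E) (ξ : E) : ℝ := sInf ((fun x => ⟪x, ξ⟫) '' Ω)

noncomputable def upperSupport (Ω : Set E) (ξ : E) : ℝ := sSup ((fun x => ⟪x, ξ⟫) '' Ω)

noncomputable def halfWidth (Ω : Set E) (ξ : E) : ℝ := (upperSupport Ω ξ - lowerSupport Ω ξ) / 2

noncomputable def midLevel (Ω : Set E) (ξ : E) : ℝ := (lowerSupport Ω ξ + upperSupport Ω ξ) / 2

lemma upperSupport_eq_midLevel_add_halfWidth (Ω : Set E) (ξ : E) :
    upperSupport Ω ξ = midLevel Ω ξ + halfWidth Ω ξ := by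
  rw [midLevel, halfWidth]; ring

lemma min_sub_lowerSupport_upperSupport_sub (Ω : Set E) (ξ : E) (t : ℝ) :
    min (t - lowerSupport Ω ξ) (upperSupport Ω ξ - t) = halfWidth Ω ξ - |t - midLevel Ω ξ| := by
  rw [halfWidth, midLevel]
  rcases le_total t ((lowerSupport Ω ξ + upperSupport Ω ξ) / 2) with h | h
  · rw [min_eq_left (by linarith), abs_of_nonpos (by linarith)]; ring
  · rw [min_eq_right (by linarith), abs_of_nonneg (by linarith)]; ring

lemma abs_sub_midLevel_lt_halfWidth_iff {t : ℝ} :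
    |t - midLevel Ω ξ| < halfWidth Ω ξ ↔ t ∈ Ioo (lowerSupport Ω ξ) (upperSupport Ω ξ) := by
  rw [abs_sub_lt_iff, mem_Ioo, halfWidth, midLevel]
  constructor <;> rintro ⟨h₁, h₂⟩ <;> constructor <;> linarith

lemma Bornology.IsBounded.image_inner (hΩ : IsBounded Ω) (ξ : E) :
    IsBounded ((fun x => ⟪x, ξ⟫) '' Ω) :=
  (innerSLFlip ℝ ξ).lipschitz.isBounded_image hΩ

lemma Bornology.IsBounded.halfWidth_nonneg (hbdd : IsBounded Ω) (ξ : E) : 0 ≤ halfWidth Ω ξ := by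
  rcases Ω.eq_empty_or_nonempty with rfl | hne
  · simp [halfWidth, lowerSupport, upperSupport]
  · have := csInf_le_csSup (hne.image _) (hbdd.image_inner ξ).bddBelow (hbdd.image_inner ξ).bddAbove
    rw [halfWidth, lowerSupport, upperSupport]
    linarith

lemma IsOpen.exists_inner_lt (hΩ : IsOpen Ω) (hx : x ∈ Ω) (hξ : ξ ≠ 0) :
    ∃ y ∈ Ω, ⟪x, ξ⟫ < ⟪y, ξ⟫ := by
  have hnear : ∀ᶠ s in 𝓝[>] (0 : ℝ), x + s • ξ ∈ Ω := by
    refine nhdsWithin_le_nhds (ContinuousAt.preimage_mem_nhds (by fun_prop) ?_)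
    simpa using hΩ.mem_nhds hx
  obtain ⟨s, hs, hsξ⟩ := (hnear.and self_mem_nhdsWithin).exists
  refine ⟨_, hs, ?_⟩
  have : 0 < s * ‖ξ‖ ^ 2 := by positivity
  rw [inner_add_left, real_inner_smul_left, real_inner_self_eq_norm_sq]
  linarith

lemma inner_lt_upperSupport (hopen : IsOpen Ω) (hbdd : IsBounded Ω) (hx : x ∈ Ω) (hξ : ξ ≠ 0) :
    ⟪x, ξ⟫ < upperSupport Ω ξ := by
  obtain ⟨y, hy, hxy⟩ := hopen.exists_inner_lt hx hξ
  exact lt_csSup_of_lt (hbdd.image_inner ξ).bddAbove (mem_image_of_mem _ hy) hxy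

lemma lowerSupport_lt_inner (hopen : IsOpen Ω) (hbdd : IsBounded Ω) (hx : x ∈ Ω) (hξ : ξ ≠ 0) :
    lowerSupport Ω ξ < ⟪x, ξ⟫ := by
  obtain ⟨y, hy, hxy⟩ := hopen.exists_inner_lt hx (neg_ne_zero.2 hξ)
  simp only [inner_neg_right, neg_lt_neg_iff] at hxy
  exact csInf_lt_of_lt (hbdd.image_inner ξ).bddBelow (mem_image_of_mem _ hy) hxy

lemma halfWidth_pos (hopen : IsOpen Ω) (hbdd : IsBounded Ω) (hx : x ∈ Ω) (hξ : ξ ≠ 0) :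
    0 < halfWidth Ω ξ := by
  rw [halfWidth]
  linarith [lowerSupport_lt_inner hopen hbdd hx hξ, inner_lt_upperSupport hopen hbdd hx hξ]

lemma Convex.exists_inner_eq (hconv : Convex ℝ Ω) {t : ℝ}
    (ht : t ∈ Ioo (lowerSupport Ω ξ) (upperSupport Ω ξ)) : ∃ x ∈ Ω, ⟪x, ξ⟫ = t := by
  have hne : ((fun x => ⟪x, ξ⟫) '' Ω).Nonempty := by
    by_contra h
    rw [not_nonempty_iff_eq_empty] at h
    have := ht.1.trans ht.2
    simp [lowerSupport, upperSupport, h] at this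
  obtain ⟨_, ha, hat⟩ := exists_lt_of_csInf_lt hne ht.1
  obtain ⟨_, hb, htb⟩ := exists_lt_of_lt_csSup hne ht.2
  exact (hconv.linear_image (innerₛₗ ℝ |>.flip ξ)).ordConnected.out ha hb ⟨hat.le, htb.le⟩

lemma Convex.exists_unit_inner_lt_of_notMem [CompleteSpace E] (hconv : Convex ℝ Ω)
    (hopen : IsOpen Ω) (hne : Ω.Nonempty) {y : E} (hy : y ∉ Ω) :
    ∃ ξ : E, ‖ξ‖ = 1 ∧ ∀ x ∈ Ω, ⟪x, ξ⟫ < ⟪y, ξ⟫ := by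
  obtain ⟨φ, hφ⟩ := geometric_hahn_banach_open_point hconv hopen hy
  set v := (InnerProductSpace.toDual ℝ E).symm φ
  have hv : ∀ x, ⟪x, v⟫ = φ x := fun x => by
    rw [real_inner_comm]; exact InnerProductSpace.toDual_symm_apply
  have hv0 : v ≠ 0 := by
    rintro h
    obtain ⟨x, hx⟩ := hne
    simpa [← hv, h] using hφ x hx
  refine ⟨(‖v‖⁻¹ : ℝ) • v, norm_smul_inv_norm hv0, fun x hx => ?_⟩
  simp only [real_inner_smul_right, hv]
  exact mul_lt_mul_of_pos_left (hφ x hx) (by positivity)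

lemma eq_ball_of_upperSupport_eq [CompleteSpace E] (hopen : IsOpen Ω) (hconv : Convex ℝ Ω)
    (hbdd : IsBounded Ω) (hne : Ω.Nonempty) {c : E} {R : ℝ} (hR : 0 < R)
    (h : ∀ ξ : E, ‖ξ‖ = 1 → upperSupport Ω ξ = ⟪c, ξ⟫ + R) : Ω = Metric.ball c R := by
  ext x
  rw [Metric.mem_ball, dist_eq_norm]
  constructor
  · intro hx
    rcases eq_or_ne x c with rfl | hxc
    · simpa using hR
    have hxc' : x - c ≠ 0 := sub_ne_zero.2 hxc
    have hξ : ‖(‖x - c‖⁻¹ : ℝ) • (x - c)‖ = 1 := norm_smul_inv_norm hxc'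
    have hlt := inner_lt_upperSupport hopen hbdd hx (ne_zero_of_norm_ne_zero (hξ.symm ▸ one_ne_zero))
    rw [h _ hξ, ← sub_lt_iff_lt_add', ← inner_sub_left, real_inner_smul_right,
      real_inner_self_eq_norm_sq, pow_two, inv_mul_cancel_left₀ (norm_ne_zero_iff.2 hxc')] at hlt
    exact hlt
  · intro hx
    by_contra hy
    obtain ⟨ξ, hξ, hlt⟩ := hconv.exists_unit_inner_lt_of_notMem hopen hne hy
    have hsup : upperSupport Ω ξ ≤ ⟪x, ξ⟫ :=
      csSup_le (hne.image _) (forall_mem_image.2 fun y hy => (hlt y hy).le)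
    have := real_inner_le_norm (x - c) ξ
    rw [h ξ hξ] at hsup
    rw [hξ, mul_one, inner_sub_left] at this
    linarith

end SupportingHyperplanes

section Profile

variable {G : ℝ → ℝ}

lemma integral_sub_mul_comp_abs_sub (φ : ℝ → ℝ) (c : ℝ) : ∫ t, (t - c) * φ |t - c| = 0 := by
  rw [integral_sub_right_eq_self (fun t => t * φ |t|) c]
  have := integral_neg_eq_self (fun t => t * φ |t|) volume
  simp only [neg_mul, abs_neg, integral_neg] at this
  linarith

lemma integral_indicator_comp_abs_sub {w : ℝ} (hw : 0 ≤ w) (c : ℝ) :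
    ∫ t, (Iio w).indicator (fun u => G (w - u)) |t - c| = 2 * ∫ u in 0..w, G u := by
  rw [integral_sub_right_eq_self (fun t => (Iio w).indicator (fun u => G (w - u)) |t|) c,
    integral_comp_abs, setIntegral_indicator measurableSet_Iio, Ioi_inter_Iio,
    ← integral_Ioc_eq_integral_Ioo, ← intervalIntegral.integral_of_le hw,
    intervalIntegral.integral_comp_sub_left, sub_self, sub_zero]

lemma strictMonoOn_integral_of_pos (hGpos : ∀ t ≥ 0, 0 < G t)
    (hGloc : ∀ r, IntegrableOn G (Icc 0 r)) : StrictMonoOn (fun s => ∫ u in 0..s, G u) (Ici 0) := by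
  intro a (ha : 0 ≤ a) b _ hab
  dsimp only
  have hint : ∀ {x y : ℝ}, 0 ≤ x → x ≤ y → IntervalIntegrable G volume x y := fun hx hxy =>
    ((hGloc _).mono_set (by rw [uIcc_of_le hxy]; exact Icc_subset_Icc_left hx)).intervalIntegrable
  rw [← intervalIntegral.integral_add_adjacent_intervals (hint le_rfl ha) (hint ha hab.le)]
  simpa using intervalIntegral.intervalIntegral_pos_of_pos_on (hint ha hab.le)
    (fun x hx => hGpos x (ha.trans hx.1.le)) hab

end Profile

lemma MeasureTheory.Integrable.smul_self_of_isBounded {E : Type*} [NormedAddCommGroup E]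
    [NormedSpace ℝ E] [MeasurableSpace E] [OpensMeasurableSpace E] [SecondCountableTopology E]
    {μ : Measure E} {Ω : Set E} {f : E → ℝ} (hf : Integrable f μ) (hbdd : IsBounded Ω)
    (hsupp : ∀ x, x ∉ Ω → f x = 0) :
    Integrable (fun x => f x • x) μ := by
  obtain ⟨C, hC⟩ := hbdd.exists_norm_le
  refine (hf.norm.const_mul C).mono' (hf.aestronglyMeasurable.smul aestronglyMeasurable_id)
    (ae_of_all _ fun x => ?_)
  by_cases hx : x ∈ Ω
  · rw [norm_smul, mul_comm]
    exact mul_le_mul_of_nonneg_right (hC x hx) (norm_nonneg _)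
  · simp [hsupp x hx]

section RadonTransform

variable {E : Type*} [NormedAddCommGroup E] [InnerProductSpace ℝ E] [FiniteDimensional ℝ E]
  [MeasurableSpace E] [BorelSpace E] {m : ℕ} {Ω : Set E} {G : ℝ → ℝ} {f : E → ℝ} {ξ : E}

def RadonEqSupportDist (m : ℕ) (Ω : Set E) (f : E → ℝ) (G : ℝ → ℝ) (ξ : E) : Prop :=
  ∀ t, 0 < μH[m] (Ω ∩ {x | ⟪x, ξ⟫ = t}) →
    ∫ x in Ω ∩ {x | ⟪x, ξ⟫ = t}, f x ∂μH[m] = G (min (t - lowerSupport Ω ξ) (upperSupport Ω ξ - t))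

lemma setIntegral_hyperplane_eq_indicator (hE : finrank ℝ E = m + 1) (hopen : IsOpen Ω)
    (hconv : Convex ℝ Ω) (hbdd : IsBounded Ω) (hsupp : ∀ x, x ∉ Ω → f x = 0) (hξ : ‖ξ‖ = 1)
    (hradon : RadonEqSupportDist m Ω f G ξ) (t : ℝ) :
    ∫ x in {x | ⟪x, ξ⟫ = t}, f x ∂μH[m] =
      (Iio (halfWidth Ω ξ)).indicator (fun u => G (halfWidth Ω ξ - u)) |t - midLevel Ω ξ| := by
  have hξ0 : ξ ≠ 0 := fun h => by simp [h] at hξ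
  have hΩ : ∫ x in {x | ⟪x, ξ⟫ = t}, f x ∂μH[m] = ∫ x in Ω ∩ {x | ⟪x, ξ⟫ = t}, f x ∂μH[m] :=
    setIntegral_eq_of_subset_of_forall_sdiff_eq_zero
      (isClosed_eq (by fun_prop) continuous_const).measurableSet inter_subset_right
      fun x hx => hsupp x fun hxΩ => hx.2 ⟨hxΩ, hx.1⟩
  rw [hΩ]
  by_cases ht : t ∈ Ioo (lowerSupport Ω ξ) (upperSupport Ω ξ)
  · obtain ⟨x, hx, rfl⟩ := hconv.exists_inner_eq ht
    rw [indicator_of_mem (mem_Iio.2 (abs_sub_midLevel_lt_halfWidth_iff.2 ht)),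
      hradon _ (hausdorffMeasure_inter_hyperplane_pos hE hξ hopen hx),
      min_sub_lowerSupport_upperSupport_sub]
  · have hempty : Ω ∩ {x | ⟪x, ξ⟫ = t} = ∅ :=
      eq_empty_of_forall_notMem fun x ⟨hx, hxt⟩ => ht (hxt ▸
        ⟨lowerSupport_lt_inner hopen hbdd hx hξ0, inner_lt_upperSupport hopen hbdd hx hξ0⟩)
    rw [indicator_of_notMem (mt (abs_sub_midLevel_lt_halfWidth_iff.1 ∘ mem_Iio.1) ht), hempty,
      Measure.restrict_empty, integral_zero_measure]

lemma hausdorffVolumeRatio_mul_integral_eq (hE : finrank ℝ E = m + 1) (hopen : IsOpen Ω)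
    (hconv : Convex ℝ Ω) (hbdd : IsBounded Ω) (hf : Integrable f) (hsupp : ∀ x, x ∉ Ω → f x = 0)
    (hξ : ‖ξ‖ = 1) (hradon : RadonEqSupportDist m Ω f G ξ) :
    hausdorffVolumeRatio m * ∫ x, f x = 2 * ∫ u in 0..halfWidth Ω ξ, G u := by
  rw [← integral_setIntegral_hyperplane hE hξ hf]
  simp_rw [setIntegral_hyperplane_eq_indicator hE hopen hconv hbdd hsupp hξ hradon]
  exact integral_indicator_comp_abs_sub (hbdd.halfWidth_nonneg ξ) _

lemma inner_integral_smul_self_eq (hE : finrank ℝ E = m + 1) (hopen : IsOpen Ω)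
    (hconv : Convex ℝ Ω) (hbdd : IsBounded Ω) (hf : Integrable f) (hsupp : ∀ x, x ∉ Ω → f x = 0)
    (hξ : ‖ξ‖ = 1) (hradon : RadonEqSupportDist m Ω f G ξ) :
    ⟪∫ x, f x • x, ξ⟫ = midLevel Ω ξ * ∫ x, f x := by
  set S := fun t => ∫ x in {x | ⟪x, ξ⟫ = t}, f x ∂μH[m]
  have hfx := hf.smul_self_of_isBounded hbdd hsupp
  have hmoment : (fun t => ∫ x in {x | ⟪x, ξ⟫ = t}, ⟪f x • x, ξ⟫ ∂μH[m]) = fun t => t * S t := by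
    ext t
    rw [← integral_const_mul]
    refine setIntegral_congr_fun (isClosed_eq (by fun_prop) continuous_const).measurableSet
      fun x (hx : ⟪x, ξ⟫ = t) => ?_
    rw [real_inner_smul_left, hx, mul_comm]
  have hS : Integrable S := integrable_setIntegral_hyperplane hE hξ hf
  have htS : Integrable fun t => t * S t :=
    hmoment ▸ integrable_setIntegral_hyperplane hE hξ (hfx.inner_const (𝕜 := ℝ) ξ)
  -- The profile `S` is symmetric about the mid-level, so `∫ (t - midLevel Ω ξ) * S t = 0`.
  have hcentered : ∫ t, t * S t = midLevel Ω ξ * ∫ t, S t := by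
    rw [← sub_eq_zero, ← integral_const_mul, ← integral_sub htS (hS.const_mul _)]
    simp_rw [← sub_mul, S, setIntegral_hyperplane_eq_indicator hE hopen hconv hbdd hsupp hξ hradon]
    exact integral_sub_mul_comp_abs_sub _ _
  have hκ : (hausdorffVolumeRatio m : ℝ) ≠ 0 := by exact_mod_cast (hausdorffVolumeRatio_pos m).ne'
  apply mul_left_cancel₀ hκ
  calc (hausdorffVolumeRatio m : ℝ) * ⟪∫ x, f x • x, ξ⟫
      = hausdorffVolumeRatio m * ∫ x, ⟪f x • x, ξ⟫ := by
        rw [real_inner_comm, ← integral_inner hfx]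
        simp_rw [real_inner_comm _ ξ]
    _ = ∫ t, t * S t := by
        rw [← hmoment, integral_setIntegral_hyperplane hE hξ (hfx.inner_const (𝕜 := ℝ) ξ)]
    _ = hausdorffVolumeRatio m * (midLevel Ω ξ * ∫ x, f x) := by
        rw [hcentered, integral_setIntegral_hyperplane hE hξ hf]; ring

end RadonTransform

theorem stmt11 (n : ℕ) (hn : 2 ≤ n) (Ω : Set (EuclideanSpace ℝ (Fin n)))
    (hopen : IsOpen Ω) (hconv : Convex ℝ Ω) (hbdd : Bornology.IsBounded Ω)
    (hne : Ω.Nonempty)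
    (G : ℝ → ℝ) (hGpos : ∀ t ≥ (0:ℝ), 0 < G t)
    (hGloc : ∀ r : ℝ, IntegrableOn G (Icc 0 r))
    (f : EuclideanSpace ℝ (Fin n) → ℝ) (hf : Integrable f)
    (hsupp : ∀ x, x ∉ Ω → f x = 0)
    (hradon : ∀ (ξ : EuclideanSpace ℝ (Fin n)) (t : ℝ), ‖ξ‖ = 1 →
      0 < μH[(n - 1 : ℕ)] (Ω ∩ {x : EuclideanSpace ℝ (Fin n) | ⟪x, ξ⟫ = t}) →
      ∫ x in Ω ∩ {x : EuclideanSpace ℝ (Fin n) | ⟪x, ξ⟫ = t}, f x ∂μH[(n - 1 : ℕ)]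
        = G (min (t - sInf ((fun x => ⟪x, ξ⟫) '' Ω)) (sSup ((fun x => ⟪x, ξ⟫) '' Ω) - t))) :
    ∃ (c : EuclideanSpace ℝ (Fin n)) (R : ℝ), 0 < R ∧ Ω = Metric.ball c R := by
  obtain ⟨m, rfl⟩ : ∃ m, n = m + 1 := ⟨n - 1, by omega⟩
  simp only [Nat.add_sub_cancel] at hradon
  have hE := finrank_euclideanSpace_fin (𝕜 := ℝ) (n := m + 1)
  have hmass ξ (hξ : ‖ξ‖ = 1) :=
    hausdorffVolumeRatio_mul_integral_eq hE hopen hconv hbdd hf hsupp hξ (hradon ξ · hξ)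
  obtain ⟨x₀, hx₀⟩ := hne
  set ξ₀ : EuclideanSpace ℝ (Fin (m + 1)) := EuclideanSpace.single 0 1
  have hξ₀ : ‖ξ₀‖ = 1 := by simp [ξ₀]
  have hR : 0 < halfWidth Ω ξ₀ := halfWidth_pos hopen hbdd hx₀ (fun h => by simp [h] at hξ₀)
  have hmono := strictMonoOn_integral_of_pos hGpos hGloc
  have hwidth ξ (hξ : ‖ξ‖ = 1) : halfWidth Ω ξ = halfWidth Ω ξ₀ :=
    hmono.injOn (hbdd.halfWidth_nonneg ξ) (hbdd.halfWidth_nonneg ξ₀)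
      (by linarith [hmass ξ hξ, hmass ξ₀ hξ₀])
  have hmass_pos : 0 < ∫ x, f x := by
    refine pos_of_mul_pos_right ?_ (hausdorffVolumeRatio m).coe_nonneg
    simpa [hmass ξ₀ hξ₀] using hmono self_mem_Ici (hbdd.halfWidth_nonneg ξ₀) hR
  refine ⟨(∫ x, f x)⁻¹ • ∫ x, f x • x, halfWidth Ω ξ₀, hR,
    eq_ball_of_upperSupport_eq hopen hconv hbdd ⟨x₀, hx₀⟩ hR fun ξ hξ => ?_⟩
  rw [real_inner_smul_left, inner_integral_smul_self_eq hE hopen hconv hbdd hf hsupp hξ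
    (hradon ξ · hξ), mul_comm (midLevel Ω ξ), inv_mul_cancel_left₀ hmass_pos.ne', ← hwidth ξ hξ,
    upperSupport_eq_midLevel_add_halfWidth]
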